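/- arXiv:1207.4733 — 3 statements merged into one kernel-verified Lean document; each statement's English description precedes it below -/
import Mathlib

section
/- For every ε with 0 < ε < 1/√n, if δ = ε(1 − √n·ε)/(4 n^{3/2} t_mix(ε/2)), then for every s ∈ [0,1] with s ≤ δ one has ‖π_s − π₀‖_TV ≤ ε/2. -/
open Matrix BigOperators

/-- A row-stochastic matrix: nonnegative entries, each row sums to 1. -/
def IsStochastic {n : ℕ} (P : Matrix (Fin n) (Fin n) ℝ) : Prop :=
  (∀ i j, 0 ≤ P i j) ∧ ∀ i, ∑ j, P i j = 1

/-- Irreducibility: every state can reach every other state. -/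
def MCIrreducible {n : ℕ} (P : Matrix (Fin n) (Fin n) ℝ) : Prop :=
  ∀ i j, ∃ m : ℕ, 0 < (P ^ m) i j

/-- Aperiodicity (for a finite chain): every state has eventually positive return
probabilities. -/
def MCAperiodic {n : ℕ} (P : Matrix (Fin n) (Fin n) ℝ) : Prop :=
  ∀ i : Fin n, ∃ N : ℕ, ∀ m : ℕ, N ≤ m → 0 < (P ^ m) i i

/-- A probability (row) vector. -/
def IsProbVec {n : ℕ} (v : Fin n → ℝ) : Prop :=
  (∀ i, 0 ≤ v i) ∧ ∑ i, v i = 1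

/-- Total variation distance between two vectors. -/
noncomputable def tvDist {n : ℕ} (μ ν : Fin n → ℝ) : ℝ :=
  (1 / 2) * ∑ i, |μ i - ν i|

/-- Euclidean norm on ℝⁿ. -/
noncomputable def euclNorm {n : ℕ} (v : Fin n → ℝ) : ℝ :=
  Real.sqrt (∑ i, (v i) ^ 2)

/-- Mixing time of `P` with stationary distribution `π`. -/
noncomputable def mixingTime {n : ℕ} (P : Matrix (Fin n) (Fin n) ℝ)
    (π : Fin n → ℝ) (ε : ℝ) : ℕ :=
  sInf {T : ℕ | ∀ ν : Fin n → ℝ, IsProbVec ν → tvDist (ν ᵥ* (P ^ T)) π ≤ ε}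

/-- The interpolation `P_t = (1-t)·P₀ + t·P₁`. -/
noncomputable def Pt {n : ℕ} (P₀ P₁ : Matrix (Fin n) (Fin n) ℝ) (t : ℝ) :
    Matrix (Fin n) (Fin n) ℝ :=
  (1 - t) • P₀ + t • P₁

/-- The ordered product `P_{(j+1)/T} P_{(j+2)/T} ⋯ P_{k/T}` (identity if `j ≥ k`). -/
noncomputable def prodSeg {n : ℕ} (P₀ P₁ : Matrix (Fin n) (Fin n) ℝ) (T j k : ℕ) :
    Matrix (Fin n) (Fin n) ℝ :=
  ((List.range (k - j)).map (fun i => Pt P₀ P₁ (((j : ℝ) + (i : ℝ) + 1) / (T : ℝ)))).prod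

/-- The ordered product `P_{1/T} P_{2/T} ⋯ P_{k/T}`. -/
noncomputable def adiabProd {n : ℕ} (P₀ P₁ : Matrix (Fin n) (Fin n) ℝ) (T k : ℕ) :
    Matrix (Fin n) (Fin n) ℝ :=
  prodSeg P₀ P₁ T 0 k

/-- Adiabatic time of the adiabatic evolution between `P₀` and `P₁`,
with `π₁` the stationary distribution of `P₁`. -/
noncomputable def adiabaticTime {n : ℕ} (P₀ P₁ : Matrix (Fin n) (Fin n) ℝ)
    (π₁ : Fin n → ℝ) (ε : ℝ) : ℕ :=
  sInf {T' : ℕ | ∀ T : ℕ, T' ≤ T → ∀ ν : Fin n → ℝ, IsProbVec ν →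
    tvDist ((ν ᵥ* P₀) ᵥ* adiabProd P₀ P₁ T T) π₁ ≤ ε}

/-- Stable adiabatic time, where `π s` is the stationary distribution of `P_s`. -/
noncomputable def stableAdiabaticTime {n : ℕ} (P₀ P₁ : Matrix (Fin n) (Fin n) ℝ)
    (π : ℝ → Fin n → ℝ) (ε : ℝ) : ℕ :=
  sInf {T : ℕ | ∀ k : ℕ, 1 ≤ k → k ≤ T →
    tvDist ((π 0) ᵥ* adiabProd P₀ P₁ T k) (π ((k : ℝ) / (T : ℝ))) < ε}

/-- `t_mix(ε) = sup_{s ∈ [0,1]} t_mix(P_s, ε)`, where `π s` is the stationary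
distribution of `P_s`. -/
noncomputable def maxMixingTime {n : ℕ} (P₀ P₁ : Matrix (Fin n) (Fin n) ℝ)
    (π : ℝ → Fin n → ℝ) (ε : ℝ) : ℕ :=
  sSup {m : ℕ | ∃ s ∈ Set.Icc (0 : ℝ) 1, m = mixingTime (Pt P₀ P₁ s) (π s) ε}

/-- `s` is a singular value of `A`: `s ≥ 0` and `s²` is an eigenvalue of `A Aᵀ`
(for a left eigenvector). -/
def IsSingularValue {n : ℕ} (A : Matrix (Fin n) (Fin n) ℝ) (s : ℝ) : Prop :=
  0 ≤ s ∧ ∃ v : Fin n → ℝ, v ≠ 0 ∧ v ᵥ* (A * Aᵀ) = (s ^ 2) • v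

/-- `σ` is the smallest nonzero (positive) singular value of `A`. -/
def IsSmallestPosSingularValue {n : ℕ} (A : Matrix (Fin n) (Fin n) ℝ) (σ : ℝ) : Prop :=
  0 < σ ∧ IsSingularValue A σ ∧ ∀ s : ℝ, 0 < s → IsSingularValue A s → σ ≤ s

namespace Stmt8Aux


variable {n : ℕ}

lemma vecMul_apply (v : Fin n → ℝ) (M : Matrix (Fin n) (Fin n) ℝ) (j : Fin n) :
    (v ᵥ* M) j = ∑ i, v i * M i j := by
  simp [Matrix.vecMul, dotProduct]

lemma sum_vecMul {Q : Matrix (Fin n) (Fin n) ℝ} (hQ : IsStochastic Q) (v : Fin n → ℝ) :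
    ∑ j, (v ᵥ* Q) j = ∑ i, v i := by
  simp only [vecMul_apply]
  rw [Finset.sum_comm]
  simp [← Finset.mul_sum, hQ.2]

lemma l1_vecMul_le {Q : Matrix (Fin n) (Fin n) ℝ} (hQ : IsStochastic Q) (v : Fin n → ℝ) :
    ∑ j, |(v ᵥ* Q) j| ≤ ∑ i, |v i| := by
  calc ∑ j, |(v ᵥ* Q) j| ≤ ∑ j, ∑ i, |v i| * Q i j := by
        refine Finset.sum_le_sum fun j _ => ?_
        rw [vecMul_apply]
        refine (Finset.abs_sum_le_sum_abs _ _).trans ?_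
        refine Finset.sum_le_sum fun i _ => ?_
        rw [abs_mul, abs_of_nonneg (hQ.1 i j)]
    _ = ∑ i, |v i| := by
        rw [Finset.sum_comm]
        simp [← Finset.mul_sum, hQ.2]

lemma probVec_vecMul {Q : Matrix (Fin n) (Fin n) ℝ} (hQ : IsStochastic Q)
    {v : Fin n → ℝ} (hv : IsProbVec v) : IsProbVec (v ᵥ* Q) := by
  constructor
  · intro j
    rw [vecMul_apply]
    exact Finset.sum_nonneg fun i _ => mul_nonneg (hv.1 i) (hQ.1 i j)
  · rw [sum_vecMul hQ, hv.2]

lemma l1_probVec {v : Fin n → ℝ} (hv : IsProbVec v) : ∑ i, |v i| = 1 := by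
  rw [← hv.2]; exact Finset.sum_congr rfl fun i _ => abs_of_nonneg (hv.1 i)

lemma tvDist_le_one {μ ν : Fin n → ℝ} (hμ : IsProbVec μ) (hν : IsProbVec ν) :
    tvDist μ ν ≤ 1 := by
  have : ∑ i, |μ i - ν i| ≤ ∑ i, (|μ i| + |ν i|) :=
    Finset.sum_le_sum fun i _ => abs_sub _ _
  rw [Finset.sum_add_distrib, l1_probVec hμ, l1_probVec hν] at this
  unfold tvDist; linarith

lemma tvDist_nonneg (μ ν : Fin n → ℝ) : 0 ≤ tvDist μ ν := by
  unfold tvDist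
  have : (0:ℝ) ≤ ∑ i, |μ i - ν i| := Finset.sum_nonneg fun i _ => abs_nonneg _
  linarith

lemma tvDist_self (μ : Fin n → ℝ) : tvDist μ μ = 0 := by simp [tvDist]

lemma tvDist_triangle (μ ν ρ : Fin n → ℝ) : tvDist μ ρ ≤ tvDist μ ν + tvDist ν ρ := by
  unfold tvDist
  rw [← mul_add, ← Finset.sum_add_distrib]
  have : ∑ i, |μ i - ρ i| ≤ ∑ i, (|μ i - ν i| + |ν i - ρ i|) :=
    Finset.sum_le_sum fun i _ => abs_sub_le _ _ _
  linarith

lemma tvDist_vecMul_le {Q : Matrix (Fin n) (Fin n) ℝ} (hQ : IsStochastic Q)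
    (μ ν : Fin n → ℝ) : tvDist (μ ᵥ* Q) (ν ᵥ* Q) ≤ tvDist μ ν := by
  unfold tvDist
  have h := l1_vecMul_le hQ (μ - ν)
  rw [Matrix.sub_vecMul] at h
  simp only [Pi.sub_apply] at h ⊢
  linarith

lemma stochastic_mul {Q R : Matrix (Fin n) (Fin n) ℝ} (hQ : IsStochastic Q)
    (hR : IsStochastic R) : IsStochastic (Q * R) := by
  constructor
  · intro i j
    rw [Matrix.mul_apply]
    exact Finset.sum_nonneg fun k _ => mul_nonneg (hQ.1 i k) (hR.1 k j)
  · intro i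
    simp only [Matrix.mul_apply]
    rw [Finset.sum_comm]
    simp [← Finset.mul_sum, hR.2, hQ.2]

lemma stochastic_one : IsStochastic (1 : Matrix (Fin n) (Fin n) ℝ) := by
  constructor
  · intro i j
    by_cases h : i = j <;> simp [Matrix.one_apply, h]
  · intro i; simp [Matrix.one_apply]

lemma stochastic_pow {Q : Matrix (Fin n) (Fin n) ℝ} (hQ : IsStochastic Q) (m : ℕ) :
    IsStochastic (Q ^ m) := by
  induction m with
  | zero => simpa using stochastic_one
  | succ k ih => rw [pow_succ]; exact stochastic_mul ih hQ


variable {n : ℕ}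

lemma doeblin {Q : Matrix (Fin n) (Fin n) ℝ} (hQ : IsStochastic Q) {θ : ℝ}
    (hθ : ∀ i j, θ ≤ Q i j) {v : Fin n → ℝ} (hv : ∑ i, v i = 0) :
    ∑ j, |(v ᵥ* Q) j| ≤ (1 - n * θ) * ∑ i, |v i| := by
  have key : ∀ j, (v ᵥ* Q) j = ∑ i, v i * (Q i j - θ) := by
    intro j
    rw [vecMul_apply]
    simp only [mul_sub]
    rw [Finset.sum_sub_distrib, ← Finset.sum_mul, hv]
    ring
  calc ∑ j, |(v ᵥ* Q) j| ≤ ∑ j, ∑ i, |v i| * (Q i j - θ) := by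
        refine Finset.sum_le_sum fun j _ => ?_
        rw [key j]
        refine (Finset.abs_sum_le_sum_abs _ _).trans ?_
        refine Finset.sum_le_sum fun i _ => ?_
        rw [abs_mul, abs_of_nonneg (sub_nonneg.mpr (hθ i j))]
    _ = (1 - n * θ) * ∑ i, |v i| := by
        rw [Finset.sum_comm]
        have : ∀ i : Fin n, ∑ j, (Q i j - θ) = 1 - n * θ := by
          intro i
          rw [Finset.sum_sub_distrib, hQ.2 i]
          simp [Finset.card_univ]
        simp only [← Finset.mul_sum, this]
        rw [← Finset.sum_mul, mul_comm]

lemma pow_entry_nonneg {P : Matrix (Fin n) (Fin n) ℝ} (hP : ∀ i j, 0 ≤ P i j)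
    (m : ℕ) (i j : Fin n) : 0 ≤ (P ^ m) i j := by
  induction m generalizing i j with
  | zero => by_cases h : i = j <;> simp [Matrix.one_apply, h]
  | succ k ih =>
      rw [pow_succ, Matrix.mul_apply]
      exact Finset.sum_nonneg fun k' _ => mul_nonneg (ih i k') (hP k' j)

lemma exists_pos_pow (hn : 1 ≤ n) {P : Matrix (Fin n) (Fin n) ℝ} (hP : IsStochastic P)
    (hi : MCIrreducible P) (ha : MCAperiodic P) :
    ∃ M : ℕ, ∀ i j, 0 < (P ^ M) i j := by
  choose N hN using ha
  choose m hm using hi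
  set B : ℕ := Finset.univ.sup fun i : Fin n => Finset.univ.sup (m i) with hB
  refine ⟨(Finset.univ.sup N) + B, fun i j => ?_⟩
  set M := (Finset.univ.sup N) + B with hM
  have hmB : m i j ≤ B := le_trans (Finset.le_sup (Finset.mem_univ j))
    (Finset.le_sup (f := fun i : Fin n => Finset.univ.sup (m i)) (Finset.mem_univ i))
  have hmM : m i j ≤ M := le_trans hmB (Nat.le_add_left _ _)
  have hsplit : M - m i j + m i j = M := Nat.sub_add_cancel hmM
  have hNi : N i ≤ M - m i j := by
    have : N i + m i j ≤ M := add_le_add (Finset.le_sup (Finset.mem_univ i)) hmB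
    omega
  have h1 : 0 < (P ^ (M - m i j)) i i := hN i _ hNi
  have h2 : 0 < (P ^ (m i j)) i j := hm i j
  have hPM : P ^ M = P ^ (M - m i j) * P ^ (m i j) := by rw [← pow_add, hsplit]
  have h3 : (P ^ (M - m i j)) i i * (P ^ (m i j)) i j ≤
      ∑ k, (P ^ (M - m i j)) i k * (P ^ (m i j)) k j :=
    Finset.single_le_sum (f := fun k => (P ^ (M - m i j)) i k * (P ^ (m i j)) k j)
      (fun k _ => mul_nonneg (pow_entry_nonneg hP.1 _ i k) (pow_entry_nonneg hP.1 _ k j))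
      (Finset.mem_univ i)
  rw [hPM, Matrix.mul_apply]
  exact lt_of_lt_of_le (mul_pos h1 h2) h3


variable {n : ℕ}

lemma l1_vecMul_le_of_rows (Q : Matrix (Fin n) (Fin n) ℝ) {D : ℝ}
    (hD : ∀ x y : Fin n, ∑ j, |Q x j - Q y j| ≤ D)
    {v : Fin n → ℝ} (hv : ∑ i, v i = 0) :
    ∑ j, |(v ᵥ* Q) j| ≤ D / 2 * ∑ i, |v i| := by
  set vp : Fin n → ℝ := fun i => max (v i) 0 with hvp
  set vn : Fin n → ℝ := fun i => max (-v i) 0 with hvn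
  have hvp0 : ∀ i, 0 ≤ vp i := fun i => le_max_right _ _
  have hvn0 : ∀ i, 0 ≤ vn i := fun i => le_max_right _ _
  have hvpn : ∀ i, v i = vp i - vn i := by
    intro i; simp only [hvp, hvn]
    rcases le_total (v i) 0 with h | h
    · rw [max_eq_right h, max_eq_left (by linarith)]; ring
    · rw [max_eq_left h, max_eq_right (by linarith)]; ring
  have habsi : ∀ i, |v i| = vp i + vn i := by
    intro i; simp only [hvp, hvn]
    rcases le_total (v i) 0 with h | h
    · rw [abs_of_nonpos h, max_eq_right h, max_eq_left (by linarith)]; ring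
    · rw [abs_of_nonneg h, max_eq_left h, max_eq_right (by linarith)]; ring
  set m : ℝ := ∑ i, vp i with hm
  have hm0 : 0 ≤ m := Finset.sum_nonneg fun i _ => hvp0 i
  have hmn : ∑ i, vn i = m := by
    have : ∑ i, (vp i - vn i) = 0 := by
      rw [← hv]; exact Finset.sum_congr rfl fun i _ => (hvpn i).symm
    rw [Finset.sum_sub_distrib] at this
    linarith
  have habs : ∑ i, |v i| = 2 * m := by
    calc ∑ i, |v i| = ∑ i, (vp i + vn i) := Finset.sum_congr rfl fun i _ => habsi i
      _ = 2 * m := by rw [Finset.sum_add_distrib, hmn]; ring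
  rcases eq_or_lt_of_le hm0 with hm0' | hmpos
  · -- m = 0 : v = 0
    have hv0 : v = 0 := by
      funext i
      have h1 : ∑ i, |v i| = 0 := by rw [habs, ← hm0']; ring
      have := (Finset.sum_eq_zero_iff_of_nonneg (fun i _ => abs_nonneg (v i))).mp h1 i
        (Finset.mem_univ i)
      simpa using this
    rw [hv0]
    simp [Matrix.zero_vecMul]
  · have key : ∀ j, m * (v ᵥ* Q) j = ∑ x, ∑ y, vp x * vn y * (Q x j - Q y j) := by
      intro j
      have h1 : ∑ x, ∑ y, vp x * vn y * Q x j = (∑ x, vp x * Q x j) * m := by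
        rw [← hmn, Finset.sum_mul]
        refine Finset.sum_congr rfl fun x _ => ?_
        rw [Finset.mul_sum]
        exact Finset.sum_congr rfl fun y _ => by ring
      have h2 : ∑ x, ∑ y, vp x * vn y * Q y j = m * ∑ y, vn y * Q y j := by
        rw [hm, Finset.sum_mul]
        refine Finset.sum_congr rfl fun x _ => ?_
        rw [Finset.mul_sum]
        exact Finset.sum_congr rfl fun y _ => by ring
      have h3 : (v ᵥ* Q) j = ∑ i, vp i * Q i j - ∑ i, vn i * Q i j := by
        rw [vecMul_apply, ← Finset.sum_sub_distrib]
        exact Finset.sum_congr rfl fun i _ => by rw [hvpn i]; ring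
      simp only [mul_sub, Finset.sum_sub_distrib, h1, h2, h3]
      ring
    have bound : m * ∑ j, |(v ᵥ* Q) j| ≤ m * m * D := by
      calc m * ∑ j, |(v ᵥ* Q) j| = ∑ j, |m * (v ᵥ* Q) j| := by
            rw [Finset.mul_sum]
            exact Finset.sum_congr rfl fun j _ => by
              rw [abs_mul, abs_of_nonneg hm0]
        _ ≤ ∑ j, ∑ x, ∑ y, vp x * vn y * |Q x j - Q y j| := by
            refine Finset.sum_le_sum fun j _ => ?_
            rw [key j]
            refine (Finset.abs_sum_le_sum_abs _ _).trans ?_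
            refine Finset.sum_le_sum fun x _ => ?_
            refine (Finset.abs_sum_le_sum_abs _ _).trans ?_
            refine Finset.sum_le_sum fun y _ => ?_
            rw [abs_mul, abs_of_nonneg (mul_nonneg (hvp0 x) (hvn0 y))]
        _ = ∑ x, ∑ y, vp x * vn y * ∑ j, |Q x j - Q y j| := by
            rw [Finset.sum_comm]
            refine Finset.sum_congr rfl fun x _ => ?_
            rw [Finset.sum_comm]
            refine Finset.sum_congr rfl fun y _ => ?_
            rw [Finset.mul_sum]
        _ ≤ ∑ x, ∑ y, vp x * vn y * D := by
            refine Finset.sum_le_sum fun x _ => Finset.sum_le_sum fun y _ => ?_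
            exact mul_le_mul_of_nonneg_left (hD x y) (mul_nonneg (hvp0 x) (hvn0 y))
        _ = m * m * D := by
            have hmm : ∑ x, ∑ y, vp x * vn y = m * m := by
              calc ∑ x, ∑ y, vp x * vn y = ∑ x, vp x * ∑ y, vn y :=
                    Finset.sum_congr rfl fun x _ => (Finset.mul_sum _ _ _).symm
                _ = m * m := by rw [hmn, ← Finset.sum_mul, ← hm]
            simp only [← Finset.sum_mul]
            rw [hmm]
    have hL : ∑ j, |(v ᵥ* Q) j| ≤ m * D := by
      refine le_of_mul_le_mul_left ?_ hmpos
      calc m * ∑ j, |(v ᵥ* Q) j| ≤ m * m * D := bound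
        _ = m * (m * D) := by ring
    calc ∑ j, |(v ᵥ* Q) j| ≤ m * D := hL
      _ = D / 2 * ∑ i, |v i| := by rw [habs]; ring

lemma stationary_pow {Q : Matrix (Fin n) (Fin n) ℝ} {p : Fin n → ℝ}
    (hp : p ᵥ* Q = p) (k : ℕ) : p ᵥ* (Q ^ k) = p := by
  induction k with
  | zero => simp [Matrix.vecMul_one]
  | succ k ih => rw [pow_succ, ← Matrix.vecMul_vecMul, ih, hp]

lemma doeblin_pow {Q : Matrix (Fin n) (Fin n) ℝ} (hQ : IsStochastic Q) {θ : ℝ}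
    (hθ : ∀ i j, θ ≤ Q i j) (hc0 : 0 ≤ 1 - n * θ)
    {v : Fin n → ℝ} (hv : ∑ i, v i = 0) (k : ℕ) :
    ∑ j, |(v ᵥ* (Q ^ k)) j| ≤ (1 - n * θ) ^ k * ∑ i, |v i| := by
  induction k with
  | zero => simp [Matrix.vecMul_one]
  | succ k ih =>
      have hQk : IsStochastic (Q ^ k) := stochastic_pow hQ k
      have hvk : ∑ j, (v ᵥ* (Q ^ k)) j = 0 := by rw [sum_vecMul hQk, hv]
      have h1 := doeblin hQ hθ hvk
      rw [pow_succ, ← Matrix.vecMul_vecMul]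
      calc ∑ j, |((v ᵥ* (Q ^ k)) ᵥ* Q) j| ≤ (1 - n * θ) * ∑ j, |(v ᵥ* (Q ^ k)) j| := h1
        _ ≤ (1 - n * θ) * ((1 - n * θ) ^ k * ∑ i, |v i|) :=
            mul_le_mul_of_nonneg_left ih hc0
        _ = (1 - n * θ) ^ (k + 1) * ∑ i, |v i| := by ring

lemma final_arith (ε s d r g tT tT' : ℝ)
    (hε0 : 0 < ε) (hr1 : 1 ≤ r) (hsε : r * ε < 1)
    (hs0 : 0 ≤ s) (hd0 : 0 ≤ d)
    (hT0 : 0 ≤ tT) (hTT' : tT ≤ tT') (hT'1 : 1 ≤ tT') (hg : 1 ≤ g)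
    (hsD : s * (4 * g * tT') ≤ ε * (1 - r * ε))
    (htri : d ≤ tT * s + ε * d) : d ≤ ε / 2 := by
  have hε1 : ε < 1 := by nlinarith
  have e1 : tT * s ≤ tT' * s := mul_le_mul_of_nonneg_right hTT' hs0
  have e2 : tT' * s ≤ g * (tT' * s) :=
    le_mul_of_one_le_left (mul_nonneg (by linarith) hs0) hg
  have h1 : 4 * (tT * s) ≤ s * (4 * g * tT') := by nlinarith [e1, e2]
  have h2 : ε * (1 - r * ε) ≤ ε * (1 - ε) := by
    nlinarith [mul_nonneg (mul_pos hε0 hε0).le (sub_nonneg.mpr hr1)]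
  have hTs : tT * s ≤ (1 - ε) * (ε / 2) := by
    nlinarith [mul_nonneg hε0.le (by linarith : (0:ℝ) ≤ 1 - ε)]
  have h3 : (1 - ε) * d ≤ (1 - ε) * (ε / 2) := by nlinarith
  exact le_of_mul_le_mul_left h3 (by linarith)

end Stmt8Aux

/-- For 0 < ε < 1/√n, with δ = ε(1 − √n ε)/(4 n^{3/2} t_mix(ε/2)),
every s ∈ [0,1] with s ≤ δ satisfies `‖π_s − π₀‖_TV ≤ ε/2`. -/
theorem stmt_8 {n : ℕ} (hn : 1 ≤ n) (P₀ P₁ : Matrix (Fin n) (Fin n) ℝ)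
    (hP₀ : IsStochastic P₀) (hP₀i : MCIrreducible P₀) (hP₀a : MCAperiodic P₀)
    (hP₁ : IsStochastic P₁) (hP₁i : MCIrreducible P₁) (hP₁a : MCAperiodic P₁)
    (π : ℝ → Fin n → ℝ)
    (hπ : ∀ t ∈ Set.Icc (0 : ℝ) 1, IsProbVec (π t) ∧ (π t) ᵥ* (Pt P₀ P₁ t) = π t)
    (ε : ℝ) (hε0 : 0 < ε) (hε1 : ε < 1 / Real.sqrt n)
    (s : ℝ) (hs : s ∈ Set.Icc (0 : ℝ) 1)
    (hsδ : s ≤ ε * (1 - Real.sqrt n * ε)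
        / (4 * (n : ℝ) ^ ((3 : ℝ) / 2) * (maxMixingTime P₀ P₁ π (ε / 2) : ℝ))) :
    tvDist (π s) (π 0) ≤ ε / 2 := by
  classical
  open Stmt8Aux in
  have hn0 : (0:ℝ) < n := by exact_mod_cast hn
  have hsqrt1 : (1:ℝ) ≤ Real.sqrt n := by
    rw [show (1:ℝ) = Real.sqrt 1 from Real.sqrt_one.symm]
    exact Real.sqrt_le_sqrt (by exact_mod_cast hn)
  have hsqrt0 : (0:ℝ) < Real.sqrt n := by linarith
  have hsε : Real.sqrt n * ε < 1 := by
    rw [lt_div_iff₀ hsqrt0] at hε1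
    linarith [hε1]
  have hε1' : ε < 1 := by nlinarith
  have hπ0 := hπ 0 ⟨le_refl 0, zero_le_one⟩
  have hπs := hπ s hs
  have hPt0 : Pt P₀ P₁ 0 = P₀ := by simp [Pt]
  have hπ0stat : (π 0) ᵥ* P₀ = π 0 := by rw [← hPt0]; exact hπ0.2
  by_cases hT'0 : maxMixingTime P₀ P₁ π (ε / 2) = 0
  · rw [hT'0] at hsδ
    norm_num at hsδ
    have hs0 : s = 0 := le_antisymm hsδ hs.1
    rw [hs0, Stmt8Aux.tvDist_self]
    linarith
  · -- the mixing set for P₀ is nonempty, via Doeblin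
    obtain ⟨M, hM⟩ := Stmt8Aux.exists_pos_pow hn hP₀ hP₀i hP₀a
    set A := P₀ ^ M with hAdef
    have hA : IsStochastic A := Stmt8Aux.stochastic_pow hP₀ M
    have i0 : Fin n := ⟨0, hn⟩
    haveI : Nonempty (Fin n × Fin n) := ⟨(i0, i0)⟩
    set θ : ℝ := Finset.univ.inf' Finset.univ_nonempty (fun p : Fin n × Fin n => A p.1 p.2)
      with hθdef
    have hθpos : 0 < θ := by
      rw [hθdef, Finset.lt_inf'_iff]
      exact fun p _ => hM p.1 p.2
    have hθle : ∀ i j, θ ≤ A i j := fun i j =>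
      Finset.inf'_le _ (Finset.mem_univ (i, j))
    set c : ℝ := 1 - n * θ with hcdef
    have hc0 : 0 ≤ c := by
      have hsum : ∑ j, (A i0 j - θ) = c := by
        rw [Finset.sum_sub_distrib, hA.2 i0]
        simp [hcdef, Finset.card_univ]
      rw [← hsum]
      exact Finset.sum_nonneg fun j _ => sub_nonneg.mpr (hθle i0 j)
    have hc1 : c < 1 := by
      have : 0 < (n:ℝ) * θ := mul_pos hn0 hθpos
      rw [hcdef]; linarith
    obtain ⟨k, hk⟩ := exists_pow_lt_of_lt_one (half_pos hε0) hc1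
    -- membership of M * k in the mixing set
    set S : Set ℕ :=
      {T : ℕ | ∀ ν : Fin n → ℝ, IsProbVec ν → tvDist (ν ᵥ* (P₀ ^ T)) (π 0) ≤ ε / 2} with hSdef
    have hSmem : M * k ∈ S := by
      intro ν hν
      have hstatk : (π 0) ᵥ* (P₀ ^ (M * k)) = π 0 := Stmt8Aux.stationary_pow hπ0stat _
      have hsum0 : ∑ i, (ν - π 0) i = 0 := by
        simp only [Pi.sub_apply]
        rw [Finset.sum_sub_distrib, hν.2, hπ0.1.2]; ring
      have hpows : P₀ ^ (M * k) = A ^ k := by rw [hAdef, ← pow_mul]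
      have hdoeb := Stmt8Aux.doeblin_pow hA hθle hc0 hsum0 k
      rw [← hcdef] at hdoeb
      simp only [Pi.sub_apply] at hdoeb
      have hl1 : ∑ i, |ν i - π 0 i| ≤ 2 := by
        have h1 : ∑ i, |ν i - π 0 i| ≤ ∑ i, (|ν i| + |π 0 i|) :=
          Finset.sum_le_sum fun i _ => abs_sub _ _
        rw [Finset.sum_add_distrib, Stmt8Aux.l1_probVec hν, Stmt8Aux.l1_probVec hπ0.1] at h1
        linarith
      have hkey : tvDist (ν ᵥ* (P₀ ^ (M * k))) (π 0) ≤ c ^ k := by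
        conv_lhs => rw [← hstatk]
        unfold tvDist
        have heq : ∀ j, (ν ᵥ* (P₀ ^ (M * k))) j - ((π 0) ᵥ* (P₀ ^ (M * k))) j
            = (((ν - π 0) ᵥ* (A ^ k))) j := by
          intro j
          rw [Matrix.sub_vecMul, Pi.sub_apply, hpows]
        calc (1:ℝ)/2 * ∑ j, |(ν ᵥ* (P₀ ^ (M * k))) j - ((π 0) ᵥ* (P₀ ^ (M * k))) j|
            = 1/2 * ∑ j, |((ν - π 0) ᵥ* (A ^ k)) j| := by
              congr 1; exact Finset.sum_congr rfl fun j _ => by rw [heq j]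
          _ ≤ 1/2 * (c ^ k * ∑ i, |ν i - π 0 i|) := by
              have h5 : ∑ j, |((ν - π 0) ᵥ* (A ^ k)) j| ≤ c ^ k * ∑ i, |ν i - π 0 i| := hdoeb
              linarith
          _ ≤ c ^ k := by
              have hck : (0:ℝ) ≤ c ^ k := pow_nonneg hc0 k
              have : c ^ k * ∑ i, |ν i - π 0 i| ≤ c ^ k * 2 :=
                mul_le_mul_of_nonneg_left hl1 hck
              linarith
      exact hkey.trans (le_of_lt hk)
    have hSne : S.Nonempty := ⟨M * k, hSmem⟩
    set T : ℕ := mixingTime P₀ (π 0) (ε / 2) with hTdef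
    have hTmem : T ∈ S := by
      have : T = sInf S := by rw [hTdef, mixingTime, hSdef]
      rw [this]
      exact Nat.sInf_mem hSne
    -- T ≤ T'
    set T' : ℕ := maxMixingTime P₀ P₁ π (ε / 2) with hT'def
    have hTT' : T ≤ T' := by
      have hBdd : BddAbove {m : ℕ | ∃ u ∈ Set.Icc (0:ℝ) 1,
          m = mixingTime (Pt P₀ P₁ u) (π u) (ε / 2)} := by
        by_contra hb
        apply hT'0
        show sSup {m : ℕ | ∃ u ∈ Set.Icc (0:ℝ) 1,
            m = mixingTime (Pt P₀ P₁ u) (π u) (ε / 2)} = 0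
        rw [csSup_of_not_bddAbove hb, csSup_empty]
        rfl
      refine le_csSup hBdd ?_
      exact ⟨0, ⟨le_refl 0, zero_le_one⟩, by rw [hPt0]⟩
    -- contraction property of P₀ ^ T
    have hQT : IsStochastic (P₀ ^ T) := Stmt8Aux.stochastic_pow hP₀ T
    have hrows : ∀ x y : Fin n, ∑ j, |(P₀ ^ T) x j - (P₀ ^ T) y j| ≤ 2 * ε := by
      intro x y
      have hδ : ∀ x : Fin n, IsProbVec (fun i => if i = x then (1:ℝ) else 0) := by
        intro x
        constructor
        · intro i; by_cases h : i = x <;> simp [h]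
        · simp
      have hrow : ∀ x : Fin n, ∀ j,
          ((fun i => if i = x then (1:ℝ) else 0) ᵥ* (P₀ ^ T)) j = (P₀ ^ T) x j := by
        intro x j
        rw [Stmt8Aux.vecMul_apply]
        simp [Finset.sum_ite_eq']
      have h1 := hTmem _ (hδ x)
      have h2 := hTmem _ (hδ y)
      unfold tvDist at h1 h2
      simp only [hrow] at h1 h2
      have h3 : ∑ j, |(P₀ ^ T) x j - (P₀ ^ T) y j|
          ≤ ∑ j, (|(P₀ ^ T) x j - π 0 j| + |π 0 j - (P₀ ^ T) y j|) :=
        Finset.sum_le_sum fun j _ => abs_sub_le _ _ _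
      rw [Finset.sum_add_distrib] at h3
      have h4 : ∑ j, |π 0 j - (P₀ ^ T) y j| = ∑ j, |(P₀ ^ T) y j - π 0 j| :=
        Finset.sum_congr rfl fun j _ => abs_sub_comm _ _
      rw [h4] at h3
      linarith
    -- single-step and iterated perturbation bounds
    have hstep : tvDist (π s) ((π s) ᵥ* P₀) ≤ s := by
      nth_rewrite 1 [← hπs.2]
      have hpt : ∀ j, ((π s) ᵥ* (Pt P₀ P₁ s)) j - ((π s) ᵥ* P₀) j
          = s * (((π s) ᵥ* P₁) j - ((π s) ᵥ* P₀) j) := by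
        intro j
        simp only [Stmt8Aux.vecMul_apply]
        rw [← Finset.sum_sub_distrib, ← Finset.sum_sub_distrib, Finset.mul_sum]
        refine Finset.sum_congr rfl fun i _ => ?_
        simp only [Pt, Matrix.add_apply, Matrix.smul_apply, smul_eq_mul]
        ring
      unfold tvDist
      have hP1s : ∑ j, |((π s) ᵥ* P₁) j| = 1 :=
        Stmt8Aux.l1_probVec (Stmt8Aux.probVec_vecMul hP₁ hπs.1)
      have hP0s : ∑ j, |((π s) ᵥ* P₀) j| = 1 :=
        Stmt8Aux.l1_probVec (Stmt8Aux.probVec_vecMul hP₀ hπs.1)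
      calc (1:ℝ)/2 * ∑ j, |((π s) ᵥ* (Pt P₀ P₁ s)) j - ((π s) ᵥ* P₀) j|
          = 1/2 * ∑ j, (s * |((π s) ᵥ* P₁) j - ((π s) ᵥ* P₀) j|) := by
            congr 1
            refine Finset.sum_congr rfl fun j _ => ?_
            rw [hpt j, abs_mul, abs_of_nonneg hs.1]
        _ ≤ 1/2 * (s * 2) := by
            rw [← Finset.mul_sum]
            have : ∑ j, |((π s) ᵥ* P₁) j - ((π s) ᵥ* P₀) j|
                ≤ ∑ j, (|((π s) ᵥ* P₁) j| + |((π s) ᵥ* P₀) j|) :=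
              Finset.sum_le_sum fun j _ => abs_sub _ _
            rw [Finset.sum_add_distrib, hP1s, hP0s] at this
            nlinarith [hs.1]
        _ = s := by ring
    have hiter : ∀ t : ℕ, tvDist (π s) ((π s) ᵥ* (P₀ ^ t)) ≤ t * s := by
      intro t
      induction t with
      | zero => simp [Matrix.vecMul_one, Stmt8Aux.tvDist_self]
      | succ t ih =>
          have h1 : (π s) ᵥ* (P₀ ^ (t+1)) = ((π s) ᵥ* P₀) ᵥ* (P₀ ^ t) := by
            rw [pow_succ', ← Matrix.vecMul_vecMul]
          calc tvDist (π s) ((π s) ᵥ* (P₀ ^ (t+1)))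
              ≤ tvDist (π s) ((π s) ᵥ* (P₀ ^ t))
                + tvDist ((π s) ᵥ* (P₀ ^ t)) ((π s) ᵥ* (P₀ ^ (t+1))) :=
                Stmt8Aux.tvDist_triangle _ _ _
            _ ≤ t * s + s := by
                refine add_le_add ih ?_
                rw [h1]
                exact (Stmt8Aux.tvDist_vecMul_le (Stmt8Aux.stochastic_pow hP₀ t) _ _).trans hstep
            _ = (t + 1 : ℕ) * s := by push_cast; ring
    -- the ε-contraction step
    set d : ℝ := tvDist (π s) (π 0) with hddef
    have hd0 : 0 ≤ d := Stmt8Aux.tvDist_nonneg _ _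
    have hπ0fix : (π 0) ᵥ* (P₀ ^ T) = π 0 := Stmt8Aux.stationary_pow hπ0stat T
    have hεd : tvDist ((π s) ᵥ* (P₀ ^ T)) (π 0) ≤ ε * d := by
      conv_lhs => rw [← hπ0fix]
      have hsum0 : ∑ i, (π s - π 0) i = 0 := by
        simp only [Pi.sub_apply]
        rw [Finset.sum_sub_distrib, hπs.1.2, hπ0.1.2]; ring
      have hcon := Stmt8Aux.l1_vecMul_le_of_rows (P₀ ^ T) hrows hsum0
      unfold tvDist
      have heq : ∀ j, ((π s) ᵥ* (P₀ ^ T)) j - ((π 0) ᵥ* (P₀ ^ T)) j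
          = ((π s - π 0) ᵥ* (P₀ ^ T)) j := by
        intro j; rw [Matrix.sub_vecMul, Pi.sub_apply]
      calc (1:ℝ)/2 * ∑ j, |((π s) ᵥ* (P₀ ^ T)) j - ((π 0) ᵥ* (P₀ ^ T)) j|
          = 1/2 * ∑ j, |((π s - π 0) ᵥ* (P₀ ^ T)) j| := by
            congr 1; exact Finset.sum_congr rfl fun j _ => by rw [heq j]
        _ ≤ 1/2 * ((2 * ε) / 2 * ∑ i, |(π s - π 0) i|) := by linarith [hcon]
        _ = ε * d := by
            rw [hddef]; unfold tvDist
            simp only [Pi.sub_apply]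
            ring
    -- assembling
    have htri : d ≤ T * s + ε * d := by
      calc d ≤ tvDist (π s) ((π s) ᵥ* (P₀ ^ T))
            + tvDist ((π s) ᵥ* (P₀ ^ T)) (π 0) := Stmt8Aux.tvDist_triangle _ _ _
        _ ≤ T * s + ε * d := add_le_add (hiter T) hεd
    -- arithmetic on the smallness of s
    clear_value A θ c S T T' d
    have hT'1 : (1:ℝ) ≤ (T' : ℝ) := by
      exact_mod_cast Nat.one_le_iff_ne_zero.mpr hT'0
    have hn32 : (1:ℝ) ≤ (n:ℝ) ^ ((3:ℝ)/2) := by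
      rw [show (1:ℝ) = (1:ℝ) ^ ((3:ℝ)/2) from (Real.one_rpow _).symm]
      exact Real.rpow_le_rpow (by norm_num) (by exact_mod_cast hn) (by norm_num)
    have hDpos : (0:ℝ) < 4 * (n:ℝ) ^ ((3:ℝ)/2) * (T' : ℝ) := by
      have h4 : (0:ℝ) < 4 := by norm_num
      nlinarith
    have hsD : s * (4 * (n:ℝ) ^ ((3:ℝ)/2) * (T' : ℝ)) ≤ ε * (1 - Real.sqrt n * ε) := by
      rw [← le_div_iff₀ hDpos]
      exact hsδ
    have hTcast : (T:ℝ) ≤ (T':ℝ) := by exact_mod_cast hTT'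
    exact Stmt8Aux.final_arith ε s d (Real.sqrt n) ((n:ℝ) ^ ((3:ℝ)/2)) (T:ℝ) (T':ℝ)
      hε0 hsqrt1 hsε hs.1 hd0 (Nat.cast_nonneg T) hTcast hT'1 hn32 hsD htri
end

section
/- Let σ be the smallest nonzero singular value of I − P₀. Then for every s ∈ [0,1], ‖π_s − π₀‖_TV ≤ 2 s n^{3/2} / σ. -/
open Matrix BigOperators

/-!
Put `v = π s - π 0`. Stationarity of `π s` for `P_s = P₀ + s (P₁ - P₀)` gives
`v (1 - P₀) = s π_s (P₁ - P₀)`, a vector with entries of size at most `s`, hence of Euclidean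
norm at most `s √n`. As `P₀` is primitive, its left fixed vectors are the multiples of `π 0`
(Perron–Frobenius), so the component `u` of `v` orthogonal to `π 0` is orthogonal to the left
kernel of `1 - P₀`, and therefore `σ ‖u‖₂ ≤ ‖u (1 - P₀)‖₂ ≤ s √n`. Since `v` has total mass `0`,
its component along `π 0` is bounded by `‖u‖₁`, whence
`‖v‖₁ ≤ 2 ‖u‖₁ ≤ 2 √n ‖u‖₂ ≤ 2 n s / σ`: in fact `‖π s - π 0‖_TV ≤ n s / σ`.
-/

namespace IsStochastic

variable {n : ℕ} {P Q : Matrix (Fin n) (Fin n) ℝ}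

lemma one : IsStochastic (1 : Matrix (Fin n) (Fin n) ℝ) :=
  ⟨fun i j => by rw [Matrix.one_apply]; split_ifs <;> norm_num,
    fun i => by simp [Matrix.one_apply]⟩

lemma sum_vecMul (hP : IsStochastic P) (x : Fin n → ℝ) : ∑ j, (x ᵥ* P) j = ∑ i, x i := by
  simp only [Matrix.vecMul, dotProduct]
  rw [Finset.sum_comm]
  simp [← Finset.mul_sum, hP.2]

lemma mul (hP : IsStochastic P) (hQ : IsStochastic Q) : IsStochastic (P * Q) :=
  ⟨fun i j => (Finset.sum_nonneg fun k _ => mul_nonneg (hP.1 i k) (hQ.1 k j) :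
      0 ≤ ∑ k, P i k * Q k j), fun i => by
    simp only [Matrix.mul_apply]
    rw [Finset.sum_comm]
    simp [← Finset.mul_sum, hQ.2, hP.2]⟩

lemma pow (hP : IsStochastic P) (m : ℕ) : IsStochastic (P ^ m) := by
  induction m with
  | zero => exact one
  | succ m ih => rw [pow_succ]; exact ih.mul hP

lemma vecMul_eq_of_le_vecMul (hP : IsStochastic P) {y : Fin n → ℝ}
    (h : ∀ j, y j ≤ (y ᵥ* P) j) : y ᵥ* P = y := by
  have := (Finset.sum_eq_sum_iff_of_le fun j _ => h j).1 (hP.sum_vecMul y).symm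
  exact funext fun j => (this j (Finset.mem_univ j)).symm

lemma abs_vecMul_le (hP : IsStochastic P) (x : Fin n → ℝ) (j : Fin n) :
    |(x ᵥ* P) j| ≤ (|x| ᵥ* P) j := by
  simp only [Matrix.vecMul, dotProduct, Pi.abs_apply]
  exact (Finset.abs_sum_le_sum_abs _ _).trans_eq <| Finset.sum_congr rfl fun i _ => by
    rw [abs_mul, abs_of_nonneg (hP.1 i j)]

end IsStochastic

lemma IsProbVec.vecMul {n : ℕ} {μ : Fin n → ℝ} {P : Matrix (Fin n) (Fin n) ℝ}
    (hμ : IsProbVec μ) (hP : IsStochastic P) : IsProbVec (μ ᵥ* P) :=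
  ⟨fun j => (Finset.sum_nonneg fun i _ => mul_nonneg (hμ.1 i) (hP.1 i j) :
      0 ≤ ∑ i, μ i * P i j),
    (hP.sum_vecMul μ).trans hμ.2⟩

lemma IsProbVec.apply_le_one {n : ℕ} {μ : Fin n → ℝ} (hμ : IsProbVec μ) (i : Fin n) : μ i ≤ 1 :=
  hμ.2 ▸ Finset.single_le_sum (fun j _ => hμ.1 j) (Finset.mem_univ i)

lemma IsProbVec.abs_sub_le_one {n : ℕ} {μ ν : Fin n → ℝ} (hμ : IsProbVec μ) (hν : IsProbVec ν)
    (i : Fin n) : |μ i - ν i| ≤ 1 :=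
  abs_sub_le_iff.2
    ⟨by linarith [hμ.apply_le_one i, hν.1 i], by linarith [hν.apply_le_one i, hμ.1 i]⟩

lemma vecMul_pow_eq_self {n : ℕ} {P : Matrix (Fin n) (Fin n) ℝ} {x : Fin n → ℝ}
    (hx : x ᵥ* P = x) (m : ℕ) : x ᵥ* P ^ m = x := by
  induction m with
  | zero => simp
  | succ m ih => rw [pow_succ, ← Matrix.vecMul_vecMul, ih, hx]

lemma pos_of_vecMul_eq_self {n : ℕ} {Q : Matrix (Fin n) (Fin n) ℝ} (hQ : ∀ i j, 0 < Q i j)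
    {y : Fin n → ℝ} (hy₀ : 0 ≤ y) (hy : y ᵥ* Q = y) (hne : y ≠ 0) (j : Fin n) : 0 < y j := by
  obtain ⟨i, hi⟩ := Function.ne_iff.mp hne
  rw [← hy]
  exact Finset.sum_pos' (fun k _ => mul_nonneg (hy₀ k) (hQ k j).le)
    ⟨i, Finset.mem_univ i, mul_pos ((hy₀ i).lt_of_ne' hi) (hQ i j)⟩

lemma IsStochastic.eq_zero_of_vecMul_eq_self {n : ℕ} {Q : Matrix (Fin n) (Fin n) ℝ}
    (hQ : IsStochastic Q) (hpos : ∀ i j, 0 < Q i j) {x : Fin n → ℝ} (hx : x ᵥ* Q = x)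
    (hsum : ∑ i, x i = 0) : x = 0 := by
  have habs : |x| ᵥ* Q = |x| :=
    hQ.vecMul_eq_of_le_vecMul fun j => by simpa only [hx, Pi.abs_apply] using hQ.abs_vecMul_le x j
  -- `|x| - x` is a nonnegative fixed vector, so it vanishes or is positive everywhere
  have hsign : (∀ i, 0 ≤ x i) ∨ ∀ i, x i ≤ 0 := by
    rcases eq_or_ne (|x| - x) 0 with h | h
    · exact .inl fun i => by simpa [sub_eq_zero] using congrFun h i
    · refine .inr fun i => ?_
      have := pos_of_vecMul_eq_self hpos (sub_nonneg.2 (le_abs_self x))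
        (by rw [Matrix.sub_vecMul, habs, hx]) h i
      simp only [Pi.sub_apply, Pi.abs_apply, sub_pos] at this
      exact not_lt.mp fun h0 => this.ne (abs_of_pos h0).symm
  funext i
  rcases hsign with h | h
  · exact (Finset.sum_eq_zero_iff_of_nonneg fun i _ => h i).1 hsum i (Finset.mem_univ i)
  · exact (Finset.sum_eq_zero_iff_of_nonpos fun i _ => h i).1 hsum i (Finset.mem_univ i)

lemma IsStochastic.exists_pow_pos {n : ℕ} {P : Matrix (Fin n) (Fin n) ℝ} (hP : IsStochastic P)
    (hirr : MCIrreducible P) (hap : MCAperiodic P) : ∃ M : ℕ, ∀ i j, 0 < (P ^ M) i j := by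
  choose m hm using hirr
  choose N hN using hap
  -- a path `i → j` of length `m i j` followed by a loop at `j` of any length `≥ N j`
  let B := Finset.univ.sup fun p : Fin n × Fin n => m p.1 p.2
  let C := Finset.univ.sup N
  refine ⟨B + C, fun i j => ?_⟩
  have hmB : m i j ≤ B := Finset.le_sup (f := fun p : Fin n × Fin n => m p.1 p.2)
    (Finset.mem_univ (i, j))
  have hNC : N j ≤ C := Finset.le_sup (Finset.mem_univ j)
  rw [show B + C = m i j + (B + C - m i j) by omega, pow_add, Matrix.mul_apply]
  exact Finset.sum_pos' (fun k _ => mul_nonneg ((hP.pow _).1 i k) ((hP.pow _).1 k j))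
    ⟨j, Finset.mem_univ j, mul_pos (hm i j) (hN j _ (by omega))⟩

lemma IsStochastic.eq_smul_of_vecMul_eq_self {n : ℕ} {P : Matrix (Fin n) (Fin n) ℝ}
    (hP : IsStochastic P) (hirr : MCIrreducible P) (hap : MCAperiodic P) {p x : Fin n → ℝ}
    (hp : p ᵥ* P = p) (hp₁ : ∑ i, p i = 1) (hx : x ᵥ* P = x) : x = (∑ i, x i) • p := by
  obtain ⟨M, hM⟩ := hP.exists_pow_pos hirr hap
  refine sub_eq_zero.mp <| (hP.pow M).eq_zero_of_vecMul_eq_self hM ?_ ?_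
  · rw [Matrix.sub_vecMul, Matrix.smul_vecMul, vecMul_pow_eq_self hx, vecMul_pow_eq_self hp]
  · simp [Finset.sum_sub_distrib, ← Finset.mul_sum, hp₁]

lemma Matrix.IsHermitian.mul_dotProduct_le_dotProduct_mulVec {ι : Type*} [Fintype ι]
    [DecidableEq ι] {M : Matrix ι ι ℝ} (hM : M.IsHermitian) {c : ℝ}
    (hc : ∀ i, hM.eigenvalues i ≠ 0 → c ≤ hM.eigenvalues i) {x : ι → ℝ}
    (hx : ∀ y, M *ᵥ y = 0 → y ⬝ᵥ x = 0) : c * (x ⬝ᵥ x) ≤ x ⬝ᵥ M *ᵥ x := by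
  -- expand `x` in an orthonormal eigenbasis of `M`; its components along the kernel vanish
  let b := hM.eigenvectorBasis
  have hinner (u v : EuclideanSpace ℝ ι) : inner ℝ u v = u.ofLp ⬝ᵥ v.ofLp := by
    rw [EuclideanSpace.inner_eq_star_dotProduct, star_trivial, dotProduct_comm]
  have hcoeff (i : ι) : inner ℝ (b i) (WithLp.toLp 2 (M *ᵥ x)) =
      hM.eigenvalues i * ((b i).ofLp ⬝ᵥ x) := by
    rw [hinner, Matrix.dotProduct_mulVec, ← Matrix.mulVec_transpose,
      ← conjTranspose_eq_transpose_of_trivial, hM.eq,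
      hM.mulVec_eigenvectorBasis, smul_dotProduct, smul_eq_mul]
  have hkernel (i : ι) (hi : hM.eigenvalues i = 0) : (b i).ofLp ⬝ᵥ x = 0 :=
    hx _ (by rw [hM.mulVec_eigenvectorBasis, hi, zero_smul])
  have hnorm := b.sum_inner_mul_inner (WithLp.toLp 2 x) (WithLp.toLp 2 x)
  have hquad := b.sum_inner_mul_inner (WithLp.toLp 2 x) (WithLp.toLp 2 (M *ᵥ x))
  simp only [hcoeff, real_inner_comm (b _) (WithLp.toLp 2 x), hinner] at hnorm hquad
  rw [← hnorm, ← hquad, Finset.mul_sum]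
  refine Finset.sum_le_sum fun i _ => ?_
  rcases eq_or_ne (hM.eigenvalues i) 0 with hi | hi
  · simp [hkernel i hi, hi]
  · nlinarith [hc i hi, mul_self_nonneg ((b i).ofLp ⬝ᵥ x)]

lemma IsSmallestPosSingularValue.sq_mul_dotProduct_le {n : ℕ} {A : Matrix (Fin n) (Fin n) ℝ}
    {σ : ℝ} (hσ : IsSmallestPosSingularValue A σ) {u : Fin n → ℝ}
    (hu : ∀ x, x ᵥ* A = 0 → x ⬝ᵥ u = 0) : σ ^ 2 * (u ⬝ᵥ u) ≤ (u ᵥ* A) ⬝ᵥ (u ᵥ* A) := by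
  have hM := Matrix.isHermitian_mul_conjTranspose_self A
  rw [Matrix.conjTranspose_eq_transpose_of_trivial] at hM
  have hquad (y : Fin n → ℝ) : y ⬝ᵥ (A * Aᵀ) *ᵥ y = (y ᵥ* A) ⬝ᵥ (y ᵥ* A) := by
    rw [← Matrix.mulVec_mulVec, Matrix.dotProduct_mulVec, Matrix.mulVec_transpose]
  refine (hM.mul_dotProduct_le_dotProduct_mulVec (fun i hi => ?_) fun y hy => ?_).trans_eq
    (hquad u)
  · have hμ : 0 ≤ hM.eigenvalues i := Matrix.eigenvalues_self_mul_conjTranspose_nonneg A i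
    have hsv : IsSingularValue A √(hM.eigenvalues i) := by
      refine ⟨Real.sqrt_nonneg _, (hM.eigenvectorBasis i).ofLp, ?_, ?_⟩
      · exact fun h => hM.eigenvectorBasis.orthonormal.ne_zero i (WithLp.ofLp_injective 2 h)
      · rw [Real.sq_sqrt hμ, ← hM.mulVec_eigenvectorBasis, ← Matrix.mulVec_transpose,
          Matrix.transpose_mul, Matrix.transpose_transpose]
    have hσμ := hσ.2.2 _ (Real.sqrt_pos.2 (hμ.lt_of_ne' hi)) hsv
    exact (Real.le_sqrt hσ.1.le hμ).1 hσμ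
  · refine hu y (dotProduct_self_eq_zero.mp ?_)
    rw [← hquad, hy, dotProduct_zero]

lemma sub_vecMul_one_sub_eq_smul {n : ℕ} {P₀ P₁ : Matrix (Fin n) (Fin n) ℝ} {s : ℝ}
    {p q : Fin n → ℝ} (hp : p ᵥ* P₀ = p) (hq : q ᵥ* Pt P₀ P₁ s = q) :
    (q - p) ᵥ* (1 - P₀) = s • (q ᵥ* P₁ - q ᵥ* P₀) := by
  rw [Pt, Matrix.vecMul_add, Matrix.vecMul_smul, Matrix.vecMul_smul] at hq
  rw [Matrix.vecMul_sub, Matrix.vecMul_one, Matrix.sub_vecMul, hp]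
  linear_combination (norm := module) -hq

lemma dotProduct_self_le_of_abs_le {n : ℕ} {w : Fin n → ℝ} {r : ℝ} (hw : ∀ j, |w j| ≤ r) :
    w ⬝ᵥ w ≤ n * r ^ 2 := by
  calc w ⬝ᵥ w ≤ ∑ _j : Fin n, r ^ 2 :=
        Finset.sum_le_sum fun j _ => by
          nlinarith [abs_mul_abs_self (w j), abs_nonneg (w j), hw j]
    _ = n * r ^ 2 := by simp

lemma sq_sum_abs_le_card_mul_dotProduct_self {n : ℕ} (u : Fin n → ℝ) :
    (∑ i, |u i|) ^ 2 ≤ n * (u ⬝ᵥ u) := by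
  simpa [dotProduct, sq_abs, sq] using
    sq_sum_le_card_mul_sum_sq (s := Finset.univ) (f := fun i => |u i|)

lemma sum_abs_le_two_mul_sum_abs_sub_smul {n : ℕ} {v p : Fin n → ℝ} (hv : ∑ i, v i = 0)
    (hp : IsProbVec p) (c : ℝ) : ∑ i, |v i| ≤ 2 * ∑ i, |(v - c • p) i| := by
  -- the component `c` along `p` is controlled by the rest, since `v` has total mass `0`
  have hc : |c| ≤ ∑ i, |(v - c • p) i| := by
    have : ∑ i, (v - c • p) i = -c := by
      simp [Finset.sum_sub_distrib, ← Finset.mul_sum, hv, hp.2]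
    rw [← abs_neg, ← this]
    exact Finset.abs_sum_le_sum_abs _ _
  calc ∑ i, |v i| ≤ ∑ i, (|(v - c • p) i| + |c| * p i) := Finset.sum_le_sum fun i _ => by
        simpa [abs_mul, abs_of_nonneg (hp.1 i)] using abs_add_le ((v - c • p) i) (c * p i)
    _ = ∑ i, |(v - c • p) i| + |c| := by
      rw [Finset.sum_add_distrib, ← Finset.mul_sum, hp.2, mul_one]
    _ ≤ 2 * ∑ i, |(v - c • p) i| := by linarith

lemma dotProduct_sub_orthogonalProjection_eq_zero {n : ℕ} {p : Fin n → ℝ} (hp : p ⬝ᵥ p ≠ 0)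
    (v : Fin n → ℝ) : p ⬝ᵥ (v - (v ⬝ᵥ p / (p ⬝ᵥ p)) • p) = 0 := by
  rw [dotProduct_sub, dotProduct_smul, smul_eq_mul, div_mul_cancel₀ _ hp, dotProduct_comm,
    sub_self]

lemma mul_sum_abs_le_of_sq_mul_dotProduct_le {n : ℕ} {u : Fin n → ℝ} {σ r : ℝ} (hσ : 0 ≤ σ)
    (hr : 0 ≤ r) (hu : σ ^ 2 * (u ⬝ᵥ u) ≤ n * r ^ 2) : σ * ∑ i, |u i| ≤ n * r := by
  refine (pow_le_pow_iff_left₀ (by positivity) (by positivity) two_ne_zero).1 ?_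
  calc (σ * ∑ i, |u i|) ^ 2 = σ ^ 2 * (∑ i, |u i|) ^ 2 := mul_pow _ _ _
    _ ≤ σ ^ 2 * (n * (u ⬝ᵥ u)) := by gcongr; exact sq_sum_abs_le_card_mul_dotProduct_self u
    _ ≤ (n * r) ^ 2 := by nlinarith [Nat.cast_nonneg (α := ℝ) n]

lemma natCast_le_rpow {y : ℝ} (hy : 1 ≤ y) (n : ℕ) : (n : ℝ) ≤ (n : ℝ) ^ y := by
  rcases Nat.eq_zero_or_pos n with rfl | hn
  · simp [Real.zero_rpow (by linarith : y ≠ 0)]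
  · exact Real.self_le_rpow_of_one_le (by exact_mod_cast hn) hy

theorem stmt_9_general {n : ℕ} (P₀ P₁ : Matrix (Fin n) (Fin n) ℝ)
    (hP₀ : IsStochastic P₀) (hP₀i : MCIrreducible P₀) (hP₀a : MCAperiodic P₀)
    (hP₁ : IsStochastic P₁)
    (π : ℝ → Fin n → ℝ)
    (hπ : ∀ t ∈ Set.Icc (0 : ℝ) 1, IsProbVec (π t) ∧ (π t) ᵥ* (Pt P₀ P₁ t) = π t)
    (σ : ℝ) (hσ : IsSmallestPosSingularValue (1 - P₀) σ)
    (s : ℝ) (hs : s ∈ Set.Icc (0 : ℝ) 1) :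
    tvDist (π s) (π 0) ≤ 2 * s * (n : ℝ) ^ ((3 : ℝ) / 2) / σ := by
  obtain ⟨hπ₀, hfix₀⟩ := hπ 0 ⟨le_rfl, zero_le_one⟩
  obtain ⟨hπs, hfixs⟩ := hπ s hs
  replace hfix₀ : π 0 ᵥ* P₀ = π 0 := by simpa [Pt] using hfix₀
  have hπ₀π₀ : π 0 ⬝ᵥ π 0 ≠ 0 := fun h => by simpa [dotProduct_self_eq_zero.mp h] using hπ₀.2
  set v := π s - π 0
  set u := v - (v ⬝ᵥ π 0 / (π 0 ⬝ᵥ π 0)) • π 0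
  -- `π 0` spans the left kernel of `1 - P₀`, and `u` is orthogonal to it
  have hu_orth (x : Fin n → ℝ) (hx : x ᵥ* (1 - P₀) = 0) : x ⬝ᵥ u = 0 := by
    rw [Matrix.vecMul_sub, Matrix.vecMul_one, sub_eq_zero, eq_comm] at hx
    rw [hP₀.eq_smul_of_vecMul_eq_self hP₀i hP₀a hfix₀ hπ₀.2 hx, smul_dotProduct,
      dotProduct_sub_orthogonalProjection_eq_zero hπ₀π₀, smul_zero]
  have huA : u ᵥ* (1 - P₀) = s • (π s ᵥ* P₁ - π s ᵥ* P₀) := by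
    have hker : π 0 ᵥ* (1 - P₀) = 0 := by
      rw [Matrix.vecMul_sub, Matrix.vecMul_one, hfix₀, sub_self]
    rw [Matrix.sub_vecMul, Matrix.smul_vecMul, hker, smul_zero, sub_zero]
    exact sub_vecMul_one_sub_eq_smul hfix₀ hfixs
  have hw (j : Fin n) : |(s • (π s ᵥ* P₁ - π s ᵥ* P₀)) j| ≤ s := by
    rw [Pi.smul_apply, smul_eq_mul, abs_mul, abs_of_nonneg hs.1]
    exact mul_le_of_le_one_right hs.1 ((hπs.vecMul hP₁).abs_sub_le_one (hπs.vecMul hP₀) j)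
  have hl1 : σ * ∑ i, |u i| ≤ n * s := mul_sum_abs_le_of_sq_mul_dotProduct_le hσ.1.le hs.1 <|
    (hσ.sq_mul_dotProduct_le hu_orth).trans (huA ▸ dotProduct_self_le_of_abs_le hw)
  have hv : ∑ i, v i = 0 := by simp [v, Finset.sum_sub_distrib, hπs.2, hπ₀.2]
  calc tvDist (π s) (π 0) = 1 / 2 * ∑ i, |v i| := rfl
    _ ≤ ∑ i, |u i| := by
      linarith [sum_abs_le_two_mul_sum_abs_sub_smul hv hπ₀ (v ⬝ᵥ π 0 / (π 0 ⬝ᵥ π 0))]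
    _ ≤ n * s / σ := by rw [le_div_iff₀ hσ.1]; linarith
    _ ≤ 2 * s * (n : ℝ) ^ ((3 : ℝ) / 2) / σ := by
      have := natCast_le_rpow (by norm_num : (1 : ℝ) ≤ 3 / 2) n
      exact div_le_div_of_nonneg_right (by nlinarith [hs.1]) hσ.1.le

/-- With σ the smallest nonzero singular value of I − P₀, for every
s ∈ [0,1], `‖π_s − π₀‖_TV ≤ 2 s n^{3/2} / σ`. -/
theorem stmt_9 {n : ℕ} (hn : 1 ≤ n) (P₀ P₁ : Matrix (Fin n) (Fin n) ℝ)
    (hP₀ : IsStochastic P₀) (hP₀i : MCIrreducible P₀) (hP₀a : MCAperiodic P₀)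
    (hP₁ : IsStochastic P₁) (hP₁i : MCIrreducible P₁) (hP₁a : MCAperiodic P₁)
    (π : ℝ → Fin n → ℝ)
    (hπ : ∀ t ∈ Set.Icc (0 : ℝ) 1, IsProbVec (π t) ∧ (π t) ᵥ* (Pt P₀ P₁ t) = π t)
    (σ : ℝ) (hσ : IsSmallestPosSingularValue (1 - P₀) σ)
    (s : ℝ) (hs : s ∈ Set.Icc (0 : ℝ) 1) :
    tvDist (π s) (π 0) ≤ 2 * s * (n : ℝ) ^ ((3 : ℝ) / 2) / σ :=
  stmt_9_general P₀ P₁ hP₀ hP₀i hP₀a hP₁ π hπ σ hσ s hs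
end

section
/- Let P be an n×n row-stochastic matrix that is irreducible and aperiodic with stationary distribution π, let ε > 0, and let t be an integer with t ≥ t_mix(P, ε). Then for every row vector v ∈ ℝⁿ with ‖v‖₂ = 1 and ⟨v, π⟩ = 0 (Euclidean inner product), one has ‖v(I − P^t)‖₂ ≥ 1 − 2√n·ε. -/
open Matrix BigOperators

/-!
Write `w = v - (∑ i, v i) • π`. Since `πPᵗ = π`, `v(I - Pᵗ) = w - wPᵗ`, and since `v ⊥ π`,
Pythagoras gives `‖w‖₂ ≥ ‖v‖₂ = 1`. The entries of `w` sum to zero, so `wPᵗ = ∑ᵢ wᵢ (eᵢPᵗ - π)`;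
as `t` is past the mixing time each `eᵢPᵗ - π` has `ℓ¹`-norm at most `2ε`, hence
`‖wPᵗ‖₂ ≤ ‖wPᵗ‖₁ ≤ 2ε‖w‖₁ ≤ 2√n ε ‖w‖₂`.

The delicate point is that `t_mix` is an infimum (with junk value `0` on the empty set), so
`t ≥ t_mix` helps only once the set of mixed times is known to be nonempty and upward closed.
Nonemptiness is Doeblin's argument: some power `P^M` is entrywise positive, so its rows dominate
`δπ` and `P^M` contracts sum-zero vectors by `1 - δ` in `ℓ¹`. Upward closure is the
`ℓ¹`-contractivity of stochastic matrices on sum-zero vectors.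
-/

open Finset

section StochasticMatrix

variable {n : ℕ} {P Q : Matrix (Fin n) (Fin n) ℝ} {π w : Fin n → ℝ}

theorem IsStochastic.pow_s13 (hP : IsStochastic P) (m : ℕ) : IsStochastic (P ^ m) := by
  induction m with
  | zero =>
    exact ⟨fun i j => by rw [pow_zero, one_apply]; positivity, fun i => by simp [one_apply]⟩
  | succ m ih =>
    refine ⟨fun i j => ?_, fun i => ?_⟩
    · rw [pow_succ, mul_apply]
      exact sum_nonneg fun k _ => mul_nonneg (ih.1 i k) (hP.1 k j)
    · simp only [pow_succ, mul_apply]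
      rw [sum_comm]
      simp only [← mul_sum, hP.2, mul_one, ih.2]

theorem IsStochastic.sum_vecMul_s13 (hQ : IsStochastic Q) (w : Fin n → ℝ) :
    ∑ j, (w ᵥ* Q) j = ∑ i, w i := by
  simp only [vecMul_apply_eq_sum]
  rw [sum_comm]
  simp only [← mul_sum, hQ.2, mul_one]

theorem vecMul_pow_eq_self_s13 (hπP : π ᵥ* P = π) (m : ℕ) : π ᵥ* (P ^ m) = π := by
  induction m with
  | zero => rw [pow_zero, vecMul_one]
  | succ m ih => rw [pow_succ, ← vecMul_vecMul, ih, hπP]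

/-- Since `∑ᵢ wᵢ = 0`, `(wQ)ⱼ = ∑ᵢ wᵢ (Qᵢⱼ - μⱼ)` for any vector `μ`. -/
theorem sum_abs_vecMul_le_of_sum_eq_zero {μ : Fin n → ℝ} {C : ℝ}
    (hQ : ∀ i, ∑ j, |Q i j - μ j| ≤ C) (hw : ∑ i, w i = 0) :
    ∑ j, |(w ᵥ* Q) j| ≤ C * ∑ i, |w i| := by
  have hrow : ∀ j, (w ᵥ* Q) j = ∑ i, w i * (Q i j - μ j) := fun j => by
    simp only [vecMul_apply_eq_sum, mul_sub, sum_sub_distrib, ← sum_mul, hw, zero_mul, sub_zero]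
  calc ∑ j, |(w ᵥ* Q) j| ≤ ∑ j, ∑ i, |w i| * |Q i j - μ j| := by
        gcongr with j
        rw [hrow]
        exact (abs_sum_le_sum_abs _ _).trans_eq (sum_congr rfl fun i _ => abs_mul _ _)
    _ = ∑ i, |w i| * ∑ j, |Q i j - μ j| := by rw [sum_comm]; simp only [mul_sum]
    _ ≤ ∑ i, |w i| * C := by gcongr with i; exact hQ i
    _ = C * ∑ i, |w i| := by rw [← sum_mul, mul_comm]

theorem IsStochastic.sum_abs_vecMul_le (hQ : IsStochastic Q) (hw : ∑ i, w i = 0) :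
    ∑ j, |(w ᵥ* Q) j| ≤ ∑ i, |w i| := by
  simpa using sum_abs_vecMul_le_of_sum_eq_zero (μ := 0) (C := 1) (fun i => by
    simp only [Pi.zero_apply, sub_zero, abs_of_nonneg (hQ.1 i _), hQ.2 i, le_refl]) hw

theorem IsStochastic.sum_abs_vecMul_le_of_minorization {δ : ℝ} (hQ : IsStochastic Q)
    (hπ : ∑ j, π j = 1) (hlow : ∀ i j, δ * π j ≤ Q i j) (hw : ∑ i, w i = 0) :
    ∑ j, |(w ᵥ* Q) j| ≤ (1 - δ) * ∑ i, |w i| := by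
  refine sum_abs_vecMul_le_of_sum_eq_zero (μ := δ • π) (fun i => le_of_eq ?_) hw
  simp only [Pi.smul_apply, smul_eq_mul]
  rw [sum_congr rfl fun j _ => abs_of_nonneg (sub_nonneg.2 (hlow i j)), sum_sub_distrib, hQ.2 i,
    ← mul_sum, hπ, mul_one]

theorem IsStochastic.sum_abs_vecMul_pow_le_of_minorization {δ : ℝ} (hQ : IsStochastic Q)
    (hπ : ∑ j, π j = 1) (hlow : ∀ i j, δ * π j ≤ Q i j) (hδ : δ ≤ 1)
    (hw : ∑ i, w i = 0) (k : ℕ) : ∑ j, |(w ᵥ* Q ^ k) j| ≤ (1 - δ) ^ k * ∑ i, |w i| := by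
  induction k with
  | zero => simp
  | succ k ih =>
    have hwk : ∑ i, (w ᵥ* Q ^ k) i = 0 := by rw [(hQ.pow_s13 k).sum_vecMul_s13, hw]
    calc ∑ j, |(w ᵥ* Q ^ (k + 1)) j|
        = ∑ j, |((w ᵥ* Q ^ k) ᵥ* Q) j| := by rw [pow_succ, vecMul_vecMul]
      _ ≤ (1 - δ) * ∑ i, |(w ᵥ* Q ^ k) i| :=
          hQ.sum_abs_vecMul_le_of_minorization hπ hlow hwk
      _ ≤ (1 - δ) * ((1 - δ) ^ k * ∑ i, |w i|) := by gcongr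
      _ = (1 - δ) ^ (k + 1) * ∑ i, |w i| := by ring

/-- Go from `i` to `j` in `m i j` steps after idling at `i` for the remaining `M - m i j ≥ N i`
steps. -/
theorem IsStochastic.exists_pos_pow (hP : IsStochastic P) (hirr : MCIrreducible P)
    (haper : MCAperiodic P) : ∃ M : ℕ, ∀ i j, 0 < (P ^ M) i j := by
  choose N hN using haper
  choose m hm using hirr
  refine ⟨univ.sup fun p : Fin n × Fin n => N p.1 + m p.1 p.2, fun i j => ?_⟩
  set M := univ.sup fun p : Fin n × Fin n => N p.1 + m p.1 p.2
  have hle : N i + m i j ≤ M :=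
    le_sup (f := fun p : Fin n × Fin n => N p.1 + m p.1 p.2) (mem_univ (i, j))
  have hsplit : P ^ M = P ^ (M - m i j) * P ^ m i j := by rw [← pow_add]; congr 1; omega
  calc 0 < (P ^ (M - m i j)) i i * (P ^ m i j) i j := mul_pos (hN i _ (by omega)) (hm i j)
    _ ≤ (P ^ M) i j := by
      rw [hsplit, mul_apply]
      exact single_le_sum (f := fun k => (P ^ (M - m i j)) i k * (P ^ m i j) k j)
        (fun k _ => mul_nonneg ((hP.pow_s13 _).1 i k) ((hP.pow_s13 _).1 k j)) (mem_univ i)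

end StochasticMatrix

section MixingTime

variable {n : ℕ} {P Q : Matrix (Fin n) (Fin n) ℝ} {π : Fin n → ℝ} {ε : ℝ}

theorem tvDist_vecMul_pow_le_of_le (hP : IsStochastic P) (hπP : π ᵥ* P = π) {ν : Fin n → ℝ}
    (hν : ∑ i, ν i = ∑ i, π i) {T T' : ℕ} (hTT' : T ≤ T') :
    tvDist (ν ᵥ* P ^ T') π ≤ tvDist (ν ᵥ* P ^ T) π := by
  have hdiff : ∀ m, ν ᵥ* P ^ m - π = (ν - π) ᵥ* P ^ m := fun m => by
    rw [sub_vecMul, vecMul_pow_eq_self_s13 hπP]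
  have hsplit : ν ᵥ* P ^ T' - π = (ν ᵥ* P ^ T - π) ᵥ* P ^ (T' - T) := by
    rw [hdiff, hdiff, vecMul_vecMul, ← pow_add, Nat.add_sub_cancel' hTT']
  have hsum : ∑ i, (ν ᵥ* P ^ T - π) i = 0 := by
    simp only [Pi.sub_apply, sum_sub_distrib, (hP.pow_s13 T).sum_vecMul_s13, hν, sub_self]
  have hcontract := (hP.pow_s13 (T' - T)).sum_abs_vecMul_le hsum
  rw [← hsplit] at hcontract
  simp only [Pi.sub_apply] at hcontract
  unfold tvDist
  gcongr

theorem exists_forall_tvDist_vecMul_pow_le (hP : IsStochastic P) (hirr : MCIrreducible P)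
    (haper : MCAperiodic P) (hπ : IsProbVec π) (hπP : π ᵥ* P = π) (hε : 0 < ε) :
    ∃ T, ∀ ν, IsProbVec ν → tvDist (ν ᵥ* P ^ T) π ≤ ε := by
  obtain ⟨M, hM⟩ := hP.exists_pos_pow hirr haper
  obtain ⟨i₀, -⟩ := nonempty_of_sum_ne_zero (hπ.2.trans_ne one_ne_zero)
  have hne : (univ : Finset (Fin n × Fin n)).Nonempty := ⟨(i₀, i₀), mem_univ _⟩
  set δ := univ.inf' hne fun p : Fin n × Fin n => (P ^ M) p.1 p.2
  have hδ : 0 < δ := (lt_inf'_iff hne).2 fun p _ => hM p.1 p.2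
  have hlow : ∀ i j, δ * π j ≤ (P ^ M) i j := fun i j =>
    calc δ * π j ≤ δ * 1 := by
          gcongr; exact hπ.2 ▸ single_le_sum (fun k _ => hπ.1 k) (mem_univ j)
      _ ≤ (P ^ M) i j := (mul_one δ).trans_le (inf'_le _ (mem_univ (i, j)))
  have hδ1 : δ ≤ 1 :=
    calc δ = ∑ j, δ * π j := by rw [← mul_sum, hπ.2, mul_one]
      _ ≤ ∑ j, (P ^ M) i₀ j := sum_le_sum fun j _ => hlow i₀ j
      _ = 1 := (hP.pow_s13 M).2 i₀
  obtain ⟨k, hk⟩ := exists_pow_lt_of_lt_one hε (sub_lt_self 1 hδ)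
  refine ⟨M * k, fun ν hν => ?_⟩
  have hsum : ∑ i, (ν - π) i = 0 := by
    simp only [Pi.sub_apply, sum_sub_distrib, hν.2, hπ.2, sub_self]
  have htwo : ∑ i, |(ν - π) i| ≤ 2 :=
    calc ∑ i, |(ν - π) i| ≤ ∑ i, (ν i + π i) := sum_le_sum fun i _ =>
          (abs_sub _ _).trans_eq (by rw [abs_of_nonneg (hν.1 i), abs_of_nonneg (hπ.1 i)])
      _ = 2 := by rw [sum_add_distrib, hν.2, hπ.2]; norm_num
  have hdecay := (hP.pow_s13 M).sum_abs_vecMul_pow_le_of_minorization hπ.2 hlow hδ1 hsum k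
  rw [← pow_mul, sub_vecMul, vecMul_pow_eq_self_s13 hπP] at hdecay
  simp only [Pi.sub_apply] at hdecay htwo
  unfold tvDist
  nlinarith [pow_nonneg (sub_nonneg.2 hδ1) k]

theorem tvDist_vecMul_pow_le_of_mixingTime_le (hP : IsStochastic P) (hirr : MCIrreducible P)
    (haper : MCAperiodic P) (hπ : IsProbVec π) (hπP : π ᵥ* P = π) (hε : 0 < ε) {t : ℕ}
    (ht : mixingTime P π ε ≤ t) {ν : Fin n → ℝ} (hν : IsProbVec ν) :
    tvDist (ν ᵥ* P ^ t) π ≤ ε :=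
  (tvDist_vecMul_pow_le_of_le hP hπP (hν.2.trans hπ.2.symm) ht).trans
    (Nat.sInf_mem (exists_forall_tvDist_vecMul_pow_le hP hirr haper hπ hπP hε) ν hν)

/-- Tested on the point masses `eᵢ`, the hypothesis bounds every row of `Q` in `ℓ¹` around `π`. -/
theorem sum_abs_vecMul_le_of_forall_tvDist_le
    (hmix : ∀ ν, IsProbVec ν → tvDist (ν ᵥ* Q) π ≤ ε) {w : Fin n → ℝ} (hw : ∑ i, w i = 0) :
    ∑ j, |(w ᵥ* Q) j| ≤ 2 * ε * ∑ i, |w i| := by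
  classical
  refine sum_abs_vecMul_le_of_sum_eq_zero (μ := π) (fun i => ?_) hw
  have hi : IsProbVec (Pi.single i 1 : Fin n → ℝ) :=
    ⟨fun j => by rw [Pi.single_apply]; split_ifs <;> norm_num, by simp⟩
  have hrow := hmix _ hi
  rw [single_one_vecMul, tvDist] at hrow
  simp only [row] at hrow
  linarith

end MixingTime

section EuclideanNorm

variable {n : ℕ}

theorem euclNorm_eq_norm (x : Fin n → ℝ) : euclNorm x = ‖WithLp.toLp 2 x‖ := by
  simp [euclNorm, EuclideanSpace.norm_eq]

theorem euclNorm_sub_euclNorm_le (x y : Fin n → ℝ) :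
    euclNorm x - euclNorm y ≤ euclNorm (x - y) := by
  simpa only [euclNorm_eq_norm, WithLp.toLp_sub] using norm_sub_norm_le _ _

theorem euclNorm_le_sum_abs (x : Fin n → ℝ) : euclNorm x ≤ ∑ i, |x i| :=
  calc euclNorm x = √(∑ i, |x i| ^ 2) := by simp only [euclNorm, sq_abs]
    _ ≤ √((∑ i, |x i|) ^ 2) :=
        Real.sqrt_le_sqrt (sum_sq_le_sq_sum_of_nonneg fun i _ => abs_nonneg _)
    _ = ∑ i, |x i| := Real.sqrt_sq (sum_nonneg fun i _ => abs_nonneg _)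

theorem sum_abs_le_sqrt_mul_euclNorm (x : Fin n → ℝ) : ∑ i, |x i| ≤ √n * euclNorm x := by
  rw [euclNorm, ← Real.sqrt_mul n.cast_nonneg]
  refine (le_abs_self _).trans (Real.abs_le_sqrt ?_)
  simpa [sq_abs] using sq_sum_le_card_mul_sum_sq (s := univ) (f := fun i => |x i|)

theorem euclNorm_le_euclNorm_sub_smul {v π : Fin n → ℝ} (hvπ : ∑ i, v i * π i = 0) (c : ℝ) :
    euclNorm v ≤ euclNorm (v - c • π) := by
  refine Real.sqrt_le_sqrt ?_
  calc ∑ i, v i ^ 2 ≤ ∑ i, v i ^ 2 - 2 * c * ∑ i, v i * π i + c ^ 2 * ∑ i, π i ^ 2 := by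
        rw [hvπ]; nlinarith [sum_nonneg fun i (_ : i ∈ univ) => sq_nonneg (π i), sq_nonneg c]
    _ = ∑ i, (v - c • π) i ^ 2 := by
        simp only [mul_sum, ← sum_sub_distrib, ← sum_add_distrib]
        exact sum_congr rfl fun i _ => by simp only [Pi.sub_apply, Pi.smul_apply, smul_eq_mul]; ring

end EuclideanNorm

theorem stmt_13_general {n : ℕ} (P : Matrix (Fin n) (Fin n) ℝ)
    (hP : IsStochastic P) (hPi : MCIrreducible P) (hPa : MCAperiodic P)
    (π : Fin n → ℝ) (hπ : IsProbVec π) (hπstat : π ᵥ* P = π)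
    (ε : ℝ) (hε : 0 < ε) (t : ℕ) (ht : mixingTime P π ε ≤ t)
    (v : Fin n → ℝ) (hvnorm : euclNorm v = 1) (hvπ : ∑ i, v i * π i = 0) :
    1 - 2 * Real.sqrt n * ε ≤ euclNorm (v ᵥ* ((1 : Matrix (Fin n) (Fin n) ℝ) - P ^ t)) := by
  set w := v - (∑ i, v i) • π
  have hw : ∑ i, w i = 0 := by
    simp only [w, Pi.sub_apply, Pi.smul_apply, smul_eq_mul, sum_sub_distrib, ← mul_sum, hπ.2,
      mul_one, sub_self]
  have hw1 : 1 ≤ euclNorm w := hvnorm ▸ euclNorm_le_euclNorm_sub_smul hvπ _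
  have hvw : v ᵥ* (1 - P ^ t) = w - w ᵥ* P ^ t := by
    simp only [w, vecMul_sub, vecMul_one, sub_vecMul, smul_vecMul, vecMul_pow_eq_self_s13 hπstat]
    abel
  have hwP : euclNorm (w ᵥ* P ^ t) ≤ 2 * √n * ε * euclNorm w :=
    calc euclNorm (w ᵥ* P ^ t) ≤ ∑ j, |(w ᵥ* P ^ t) j| := euclNorm_le_sum_abs _
      _ ≤ 2 * ε * ∑ i, |w i| := sum_abs_vecMul_le_of_forall_tvDist_le
          (fun _ => tvDist_vecMul_pow_le_of_mixingTime_le hP hPi hPa hπ hπstat hε ht) hw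
      _ ≤ 2 * ε * (√n * euclNorm w) := by gcongr; exact sum_abs_le_sqrt_mul_euclNorm w
      _ = 2 * √n * ε * euclNorm w := by ring
  rw [hvw]
  rcases le_or_gt (1 - 2 * √n * ε) 0 with hneg | hpos
  · exact hneg.trans (Real.sqrt_nonneg _)
  · calc 1 - 2 * √n * ε ≤ (1 - 2 * √n * ε) * euclNorm w := le_mul_of_one_le_right hpos.le hw1
      _ ≤ euclNorm w - euclNorm (w ᵥ* P ^ t) := by linarith
      _ ≤ euclNorm (w - w ᵥ* P ^ t) := euclNorm_sub_euclNorm_le _ _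

/-- For an irreducible aperiodic stochastic P with stationary π, ε > 0
and any integer t ≥ t_mix(P, ε): every row vector v with ‖v‖₂ = 1 and ⟨v, π⟩ = 0
satisfies `‖v(I − Pᵗ)‖₂ ≥ 1 − 2√n·ε`. -/
theorem stmt_13 {n : ℕ} (hn : 1 ≤ n) (P : Matrix (Fin n) (Fin n) ℝ)
    (hP : IsStochastic P) (hPi : MCIrreducible P) (hPa : MCAperiodic P)
    (π : Fin n → ℝ) (hπ : IsProbVec π) (hπstat : π ᵥ* P = π)
    (ε : ℝ) (hε : 0 < ε) (t : ℕ) (ht : mixingTime P π ε ≤ t)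
    (v : Fin n → ℝ) (hvnorm : euclNorm v = 1) (hvπ : ∑ i, v i * π i = 0) :
    1 - 2 * Real.sqrt n * ε ≤ euclNorm (v ᵥ* ((1 : Matrix (Fin n) (Fin n) ℝ) - P ^ t)) :=
  stmt_13_general P hP hPi hPa π hπ hπstat ε hε t ht v hvnorm hvπ
end
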